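/- For fixed λ > 0 and α ∈ (0,1) with 0 < 1−α < 1−e^{-λ}, there exist an integer L and a constant C_L such that for all sufficiently large n: (a) P(1 ≤ K_n ≤ L) ≥ 1−α where K_n ~ Binomial(n, λ/n), and (b) there exists an L-disjunct family on [n] of size at most C_L log n. Consequently the two-round procedure (global test, then the disjunct family if positive) succeeds with probability at least 1−α and uses at most 1 + C_L log n expected tests. -/

import Mathlib

open MeasureTheory
open scoped ENNReal

/-- `F` is `L`-disjunct. -/
def IsDisjunct {n m : ℕ} (L : ℕ) (F : Fin m → Finset (Fin n)) : Prop :=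
  ∀ i : Fin n, ∀ S : Finset (Fin n), i ∉ S → S.card ≤ L →
    ∃ j : Fin m, i ∈ F j ∧ Disjoint (F j) S

/-- The sparse model: each of the `n` elements is independently excellent with
probability `λ/n` (truncated at 1, which is inactive once `n ≥ λ`). -/
noncomputable def sparseMeasure (lam : ℝ) (n : ℕ) : Measure (Fin n → Bool) :=
  Measure.pi fun _ =>
    (PMF.bernoulli (min (Real.toNNReal (lam / n)) 1) (min_le_right _ _)).toMeasure

/-- Number of excellent elements. -/
def numExcellent {n : ℕ} (ω : Fin n → Bool) : ℕ :=
  (Finset.univ.filter fun i => ω i = true).card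


/-!
The probability bound and the family are obtained separately. The event `K_n = 0` has
probability `(1 - λ/n)^n ≤ e^{-λ}`, and a union bound over `(L+1)`-subsets gives
`P(K_n > L) ≤ C(n, L+1) (λ/n)^{L+1} ≤ λ^{L+1}/(L+1)!`, which tends to `0` as `L` grows.
For the family, the fraction of families of `m` subsets of `[n]` none of which contains `i`
and misses the `L`-set `S` is `(1 - 2^{-(L+1)})^m`; a union bound over the at most `n^{L+1}`
pairs `(i, S)` leaves an `L`-disjunct family as soon as
`m > (L+1) log n / log (2^{L+1} / (2^{L+1} - 1))`. Such a family decodes any excellent set `E`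
with `|E| ≤ L`: the elements all of whose tests are positive are exactly those of `E`.
-/

open Finset

section Isolating

variable {α : Type*} [Fintype α] [DecidableEq α]

lemma card_filter_mem_and_disjoint {i : α} {S : Finset α} (hi : i ∉ S) :
    #{T : Finset α | i ∈ T ∧ Disjoint T S} = 2 ^ (Fintype.card α - (#S + 1)) := by
  have hIcc : ({T : Finset α | i ∈ T ∧ Disjoint T S} : Finset (Finset α)) = Icc {i} Sᶜ := by
    ext T
    simp [singleton_subset_iff, subset_compl_iff_disjoint_right]
  rw [hIcc, card_Icc_finset (by simpa using hi), card_compl, card_singleton, Nat.sub_sub]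

lemma card_filter_neg_mem_and_disjoint {i : α} {S : Finset α} (hi : i ∉ S) :
    #{T : Finset α | ¬(i ∈ T ∧ Disjoint T S)} =
      2 ^ (Fintype.card α - (#S + 1)) * (2 ^ (#S + 1) - 1) := by
  have hS : #S + 1 ≤ Fintype.card α := by
    simpa [card_insert_of_notMem hi] using card_le_univ (insert i S)
  have hsplit := card_filter_add_card_filter_not
    (s := (univ : Finset (Finset α))) (p := fun T => i ∈ T ∧ Disjoint T S)
  rw [card_univ, Fintype.card_finset, card_filter_mem_and_disjoint hi] at hsplit
  rw [Nat.mul_sub, mul_one, ← pow_add, Nat.sub_add_cancel hS]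
  omega

end Isolating

lemma IsDisjunct.of_forall_card_eq {n m L : ℕ} (hLn : L < n) {F : Fin m → Finset (Fin n)}
    (h : ∀ i, ∀ S ∈ powersetCard L (univ.erase i), ∃ j, i ∈ F j ∧ Disjoint (F j) S) :
    IsDisjunct L F := by
  intro i S hiS hSL
  have hsub : S ⊆ univ.erase i := fun a ha =>
    mem_erase.2 ⟨fun h => hiS (h ▸ ha), mem_univ a⟩
  obtain ⟨S', hSS', hS'i, hS'L⟩ := exists_subsuperset_card_eq hsub hSL
    (by rw [card_erase_of_mem (mem_univ i), card_univ, Fintype.card_fin]; omega)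
  obtain ⟨j, hij, hdisj⟩ := h i S' (mem_powersetCard.2 ⟨hS'i, hS'L⟩)
  exact ⟨j, hij, hdisj.mono_right hSS'⟩

lemma exists_isDisjunct_of_lt {n L m : ℕ} (hLn : L < n)
    (hcount : n ^ (L + 1) * (2 ^ (L + 1) - 1) ^ m < (2 ^ (L + 1)) ^ m) :
    ∃ F : Fin m → Finset (Fin n), IsDisjunct L F := by
  set bad : Fin n → Finset (Fin n) → Finset (Finset (Fin n)) :=
    fun i S => {T | ¬(i ∈ T ∧ Disjoint T S)}
  set Bad := univ.biUnion fun i =>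
    (powersetCard L (univ.erase i)).biUnion fun S => Fintype.piFinset fun _ : Fin m => bad i S
  have hBad : #Bad < #(univ : Finset (Fin m → Finset (Fin n))) := by
    set a := 2 ^ (n - (L + 1))
    have hbad : ∀ i, ∀ S ∈ powersetCard L (univ.erase i),
        #(Fintype.piFinset fun _ : Fin m => bad i S) = (a * (2 ^ (L + 1) - 1)) ^ m := by
      intro i S hS
      have hiS : i ∉ S := fun h => by simpa using (mem_powersetCard.1 hS).1 h
      rw [Fintype.card_piFinset_const, card_filter_neg_mem_and_disjoint hiS,
        (mem_powersetCard.1 hS).2, Fintype.card_fin]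
    have hpairs : ∀ i : Fin n, #(powersetCard L (univ.erase i)) ≤ n ^ L := fun i =>
      calc #(powersetCard L (univ.erase i)) = (n - 1).choose L := by simp
        _ ≤ n.choose L := Nat.choose_le_choose L (Nat.sub_le n 1)
        _ ≤ n ^ L := Nat.choose_le_pow n L
    calc #Bad ≤ #(univ : Finset (Fin n)) * (n ^ L * (a * (2 ^ (L + 1) - 1)) ^ m) := by
          refine card_biUnion_le_card_mul _ _ _ fun i _ => ?_
          refine (card_biUnion_le_card_mul _ _ _ fun S hS => (hbad i S hS).le).trans ?_
          exact Nat.mul_le_mul_right _ (hpairs i)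
      _ = n ^ (L + 1) * (2 ^ (L + 1) - 1) ^ m * a ^ m := by
          rw [card_univ, Fintype.card_fin, mul_pow]; ring
      _ < (2 ^ (L + 1)) ^ m * a ^ m := Nat.mul_lt_mul_of_pos_right hcount (by positivity)
      _ = #(univ : Finset (Fin m → Finset (Fin n))) := by
          rw [card_univ, Fintype.card_fun, Fintype.card_finset, Fintype.card_fin, Fintype.card_fin,
            ← mul_pow, ← pow_add, Nat.add_sub_cancel' hLn]
  obtain ⟨F, -, hF⟩ := exists_mem_notMem_of_card_lt_card hBad
  refine ⟨F, IsDisjunct.of_forall_card_eq hLn fun i S hS => ?_⟩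
  by_contra! h
  refine hF (mem_biUnion.2 ⟨i, mem_univ i, mem_biUnion.2 ⟨S, hS, ?_⟩⟩)
  simpa [bad] using h

lemma exists_lt_pow_le_logb_add_one {x r : ℝ} (hx : 1 ≤ x) (hr : 1 < r) :
    ∃ m : ℕ, (m : ℝ) ≤ Real.logb r x + 1 ∧ x < r ^ m := by
  have hlog : 0 ≤ Real.logb r x := Real.logb_nonneg hr hx
  refine ⟨⌊Real.logb r x⌋₊ + 1, by push_cast; linarith [Nat.floor_le hlog], ?_⟩
  rw [← Real.rpow_natCast, ← Real.logb_lt_iff_lt_rpow hr (by linarith)]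
  exact_mod_cast Nat.lt_floor_add_one _

noncomputable def disjunctSizeConst (L : ℕ) : ℝ :=
  (L + 1) / Real.log (2 ^ (L + 1) / (2 ^ (L + 1) - 1)) + 1

lemma exists_isDisjunct_card_le_log {n L : ℕ} (hn : 3 ≤ n) (hLn : L < n) :
    ∃ m : ℕ, (m : ℝ) ≤ disjunctSizeConst L * Real.log n ∧
      ∃ F : Fin m → Finset (Fin n), IsDisjunct L F := by
  set q : ℝ := 2 ^ (L + 1)
  have hq : 2 ≤ q := le_self_pow₀ one_le_two (Nat.succ_ne_zero L)
  have hr : 1 < q / (q - 1) := by rw [one_lt_div] <;> linarith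
  have hlogn : 1 ≤ Real.log n := by
    rw [Real.le_log_iff_exp_le (by positivity)]
    have h3 : (3 : ℝ) ≤ n := by exact_mod_cast hn
    linarith [Real.exp_one_lt_d9]
  obtain ⟨m, hm, hlt⟩ := exists_lt_pow_le_logb_add_one
    (one_le_pow₀ (by exact_mod_cast (by omega : 1 ≤ n)) : (1 : ℝ) ≤ (n : ℝ) ^ (L + 1)) hr
  refine ⟨m, ?_, exists_isDisjunct_of_lt hLn ?_⟩
  · have hc : 0 ≤ (L + 1 : ℝ) / Real.log (q / (q - 1)) := div_nonneg (by positivity)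
      (Real.log_nonneg hr.le)
    rw [Real.logb, Real.log_pow] at hm
    calc (m : ℝ) ≤ (L + 1 : ℝ) / Real.log (q / (q - 1)) * Real.log n + 1 := by
          convert hm using 2; push_cast; ring
      _ ≤ disjunctSizeConst L * Real.log n := by
          unfold disjunctSizeConst; nlinarith
  · have hreal : (n : ℝ) ^ (L + 1) * (q - 1) ^ m < q ^ m := by
      calc (n : ℝ) ^ (L + 1) * (q - 1) ^ m < (q / (q - 1)) ^ m * (q - 1) ^ m :=
            mul_lt_mul_of_pos_right hlt (pow_pos (by linarith) m)
        _ = q ^ m := by rw [← mul_pow, div_mul_cancel₀ _ (by linarith)]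
    have hcast : ((2 ^ (L + 1) - 1 : ℕ) : ℝ) = q - 1 := by
      rw [Nat.cast_sub Nat.one_le_two_pow]; push_cast; rfl
    have hnat :
        ((n ^ (L + 1) * (2 ^ (L + 1) - 1) ^ m : ℕ) : ℝ) < ((2 ^ (L + 1)) ^ m : ℕ) := by
      push_cast [hcast]
      exact hreal
    exact_mod_cast hnat

lemma MeasureTheory.Measure.pi_setOf_forall_mem_eq {ι β : Type*} [Fintype ι] [MeasurableSpace β]
    [MeasurableSingletonClass β] (ν : Measure β) [IsProbabilityMeasure ν] (A : Finset ι)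
    (b : β) :
    Measure.pi (fun _ : ι => ν) {ω | ∀ i ∈ A, ω i = b} = ν {b} ^ #A := by
  classical
  have hpi : {ω : ι → β | ∀ i ∈ A, ω i = b} =
      Set.univ.pi fun i => if i ∈ A then {b} else Set.univ := by
    ext ω
    simp only [Set.mem_setOf_eq, Set.mem_pi, Set.mem_univ, true_implies]
    exact forall_congr' fun i => by split_ifs <;> simp [*]
  rw [hpi, Measure.pi_pi]
  simp [apply_ite ν, prod_ite_mem]

instance (lam : ℝ) (n : ℕ) : IsProbabilityMeasure (sparseMeasure lam n) := by
  unfold sparseMeasure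
  infer_instance

lemma sparseMeasure_forall_mem_true_le (lam : ℝ) {n : ℕ} (A : Finset (Fin n)) :
    sparseMeasure lam n {ω | ∀ i ∈ A, ω i = true} ≤ ENNReal.ofReal (lam / n) ^ #A := by
  rw [sparseMeasure, Measure.pi_setOf_forall_mem_eq, PMF.toMeasure_apply_singleton _ _
    (measurableSet_singleton _), PMF.bernoulli_apply]
  gcongr
  exact ENNReal.coe_le_coe.2 (min_le_left _ _)

lemma sparseMeasure_forall_false {lam : ℝ} {n : ℕ} (h0 : 0 ≤ lam) (hn : lam ≤ n) :
    sparseMeasure lam n {ω | ∀ i ∈ univ, ω i = false} = ENNReal.ofReal (1 - lam / n) ^ n := by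
  have hp : lam / n ≤ 1 := div_le_one_of_le₀ hn (Nat.cast_nonneg n)
  rw [sparseMeasure, Measure.pi_setOf_forall_mem_eq, PMF.toMeasure_apply_singleton _ _
    (measurableSet_singleton _), PMF.bernoulli_apply, card_univ, Fintype.card_fin,
    min_eq_left (Real.toNNReal_le_one.2 hp),
    ENNReal.ofReal_sub _ (div_nonneg h0 (Nat.cast_nonneg n)), ENNReal.ofReal_one]
  rfl

lemma choose_mul_div_pow_le {lam : ℝ} (h0 : 0 ≤ lam) (n k : ℕ) :
    (n.choose k : ℝ) * (lam / n) ^ k ≤ lam ^ k / k.factorial := by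
  have hn : (n : ℝ) * (lam / n) ≤ lam := by
    rcases eq_or_ne (n : ℝ) 0 with h | h
    · simpa [h] using h0
    · rw [mul_div_cancel₀ _ h]
  calc (n.choose k : ℝ) * (lam / n) ^ k ≤ (n : ℝ) ^ k / k.factorial * (lam / n) ^ k := by
        gcongr
        exact Nat.choose_le_pow_div k n
    _ = ((n : ℝ) * (lam / n)) ^ k / k.factorial := by ring
    _ ≤ lam ^ k / k.factorial := by gcongr

lemma sparseMeasure_numExcellent_eq_zero_le {lam : ℝ} {n : ℕ} (h0 : 0 ≤ lam)
    (hn : lam ≤ n) :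
    sparseMeasure lam n {ω | numExcellent ω = 0} ≤ ENNReal.ofReal (Real.exp (-lam)) := by
  have hzero :
      {ω : Fin n → Bool | numExcellent ω = 0} = {ω | ∀ i ∈ univ, ω i = false} := by
    ext ω
    simp [numExcellent, filter_eq_empty_iff]
  rw [hzero, sparseMeasure_forall_false h0 hn, ← ENNReal.ofReal_pow
    (sub_nonneg.2 (div_le_one_of_le₀ hn (Nat.cast_nonneg n)))]
  exact ENNReal.ofReal_le_ofReal (Real.one_sub_div_pow_le_exp_neg hn)

lemma sparseMeasure_le_numExcellent_le {lam : ℝ} (h0 : 0 ≤ lam) (n k : ℕ) :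
    sparseMeasure lam n {ω | k ≤ numExcellent ω} ≤
      ENNReal.ofReal (lam ^ k / k.factorial) := by
  have hsub : {ω : Fin n → Bool | k ≤ numExcellent ω} ⊆
      ⋃ A ∈ powersetCard k univ, {ω | ∀ i ∈ A, ω i = true} := by
    intro ω hω
    obtain ⟨A, hA, hAk⟩ := exists_subset_card_eq (s := {i | ω i = true}) hω
    exact Set.mem_biUnion (mem_powersetCard.2 ⟨subset_univ A, hAk⟩)
      fun i hi => (mem_filter.1 (hA hi)).2
  calc sparseMeasure lam n {ω | k ≤ numExcellent ω}
      ≤ ∑ A ∈ powersetCard k univ, sparseMeasure lam n {ω | ∀ i ∈ A, ω i = true} :=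
        (measure_mono hsub).trans (measure_biUnion_finset_le _ _)
    _ ≤ ∑ A ∈ powersetCard k (univ : Finset (Fin n)), ENNReal.ofReal (lam / n) ^ k :=
        sum_le_sum fun A hA => (mem_powersetCard.1 hA).2 ▸ sparseMeasure_forall_mem_true_le lam A
    _ = ENNReal.ofReal (n.choose k * (lam / n) ^ k) := by
        rw [sum_const, card_powersetCard, card_univ, Fintype.card_fin, nsmul_eq_mul,
          ENNReal.ofReal_mul (Nat.cast_nonneg _), ENNReal.ofReal_natCast,
          ENNReal.ofReal_pow (div_nonneg h0 (Nat.cast_nonneg n))]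
    _ ≤ ENNReal.ofReal (lam ^ k / k.factorial) :=
        ENNReal.ofReal_le_ofReal (choose_mul_div_pow_le h0 n k)

lemma ofReal_one_sub_le_sparseMeasure {lam : ℝ} {n : ℕ} (h0 : 0 ≤ lam) (hn : lam ≤ n)
    (L : ℕ) :
    ENNReal.ofReal (1 - (Real.exp (-lam) + lam ^ (L + 1) / (L + 1).factorial)) ≤
      sparseMeasure lam n {ω | 1 ≤ numExcellent ω ∧ numExcellent ω ≤ L} := by
  set S := {ω : Fin n → Bool | 1 ≤ numExcellent ω ∧ numExcellent ω ≤ L}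
  have hcompl : Sᶜ ⊆ {ω | numExcellent ω = 0} ∪ {ω | L + 1 ≤ numExcellent ω} := by
    intro ω hω
    simp only [S, Set.mem_compl_iff, Set.mem_setOf_eq, not_and, not_le] at hω
    simp only [Set.mem_union, Set.mem_setOf_eq]
    omega
  have hμ : sparseMeasure lam n Sᶜ ≤
      ENNReal.ofReal (Real.exp (-lam) + lam ^ (L + 1) / (L + 1).factorial) := by
    rw [ENNReal.ofReal_add (Real.exp_pos _).le (by positivity)]
    exact (measure_mono hcompl).trans ((measure_union_le _ _).trans (add_le_add
      (sparseMeasure_numExcellent_eq_zero_le h0 hn) (sparseMeasure_le_numExcellent_le h0 n _)))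
  rw [← compl_compl S, prob_compl_eq_one_sub S.toFinite.measurableSet.compl,
    ENNReal.ofReal_sub _ (by positivity), ENNReal.ofReal_one]
  exact tsub_le_tsub_left hμ 1

section Decoding

variable {n m : ℕ}

def testOutcomes (F : Fin m → Finset (Fin n)) (E : Finset (Fin n)) : Fin m → Bool :=
  fun j => decide (F j ∩ E).Nonempty

def compatibleSet (F : Fin m → Finset (Fin n)) (t : Fin m → Bool) : Finset (Fin n) :=
  {i | ∀ j, i ∈ F j → t j = true}

def decodeCompatible (F : Fin m → Finset (Fin n)) (t : Fin m → Bool) : Option (Fin n) :=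
  if h : (compatibleSet F t).Nonempty then some ((compatibleSet F t).min' h) else none

lemma IsDisjunct.compatibleSet_testOutcomes {L : ℕ} {F : Fin m → Finset (Fin n)}
    (hF : IsDisjunct L F) {E : Finset (Fin n)} (hE : #E ≤ L) :
    compatibleSet F (testOutcomes F E) = E := by
  ext i
  simp only [compatibleSet, testOutcomes, mem_filter, mem_univ, true_and, decide_eq_true_eq]
  constructor
  · intro h
    by_contra hi
    obtain ⟨j, hij, hdisj⟩ := hF i E hi hE
    obtain ⟨a, ha⟩ := h j hij
    exact disjoint_left.1 hdisj (mem_inter.1 ha).1 (mem_inter.1 ha).2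
  · exact fun hi j hij => ⟨i, mem_inter.2 ⟨hij, hi⟩⟩

lemma IsDisjunct.exists_decodeCompatible_eq_some {L : ℕ} {F : Fin m → Finset (Fin n)}
    (hF : IsDisjunct L F) {E : Finset (Fin n)} (hE : E.Nonempty) (hEL : #E ≤ L) :
    ∃ i ∈ E, decodeCompatible F (testOutcomes F E) = some i := by
  have hC := hF.compatibleSet_testOutcomes hEL
  have hne : (compatibleSet F (testOutcomes F E)).Nonempty := by rwa [hC]
  exact ⟨_, hC.subset (min'_mem _ hne), dif_pos hne⟩

end Decoding

lemma integral_one_add_mul_ite_le {Ω : Type*} [MeasurableSpace Ω] (μ : Measure Ω)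
    [IsProbabilityMeasure μ] {c : ℝ} (hc : 0 ≤ c) (p : Ω → Prop) [DecidablePred p] :
    ∫ ω, (1 + c * if p ω then 1 else 0) ∂μ ≤ 1 + c := by
  have hle : ∀ ω, (1 + c * if p ω then 1 else 0) ≤ 1 + c := fun ω => by
    split_ifs <;> linarith
  calc ∫ ω, (1 + c * if p ω then 1 else 0) ∂μ ≤ ∫ _, (1 + c) ∂μ :=
        integral_mono_of_nonneg (ae_of_all _ fun ω => by positivity) (integrable_const _)
          (ae_of_all _ hle)
    _ = 1 + c := by simp

theorem two_round_upper_bound_general (lam α : ℝ) (hl : 0 < lam)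
    (hfeas : Real.exp (-lam) < α) :
    ∃ (L : ℕ) (C : ℝ) (N : ℕ), ∀ n : ℕ, N ≤ n →
      (ENNReal.ofReal (1 - α) ≤
        sparseMeasure lam n {ω | 1 ≤ numExcellent ω ∧ numExcellent ω ≤ L}) ∧
      (∃ m : ℕ, (m : ℝ) ≤ C * Real.log n ∧
        ∃ F : Fin m → Finset (Fin n), IsDisjunct L F) ∧
      (∃ (m : ℕ) (F : Fin m → Finset (Fin n))
          (Φ : Bool → (Fin m → Bool) → Option (Fin n)),
        (m : ℝ) ≤ C * Real.log n ∧
        ENNReal.ofReal (1 - α) ≤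
          sparseMeasure lam n
            {ω | ∃ i : Fin n,
              Φ (decide (1 ≤ numExcellent ω))
                  (fun j => decide ((F j ∩ Finset.univ.filter fun i => ω i = true).Nonempty))
                = some i ∧ ω i = true} ∧
        ∫ ω, (1 + (m : ℝ) * (if 1 ≤ numExcellent ω then 1 else 0))
            ∂(sparseMeasure lam n) ≤ 1 + C * Real.log n) := by
  obtain ⟨L, hL⟩ : ∃ L : ℕ, Real.exp (-lam) + lam ^ (L + 1) / (L + 1).factorial ≤ α := by
    obtain ⟨L, hL⟩ := ((FloorSemiring.tendsto_pow_div_factorial_atTop lam).eventually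
      (gt_mem_nhds (sub_pos.2 hfeas))).exists_forall_of_atTop
    exact ⟨L, by linarith [hL (L + 1) L.le_succ]⟩
  refine ⟨L, disjunctSizeConst L, max ⌈lam⌉₊ (max 3 (L + 1)), fun n hn => ?_⟩
  have hlam : lam ≤ n := (Nat.le_ceil lam).trans (by exact_mod_cast le_of_max_le_left hn)
  have hgood : ENNReal.ofReal (1 - α) ≤
      sparseMeasure lam n {ω | 1 ≤ numExcellent ω ∧ numExcellent ω ≤ L} :=
    (ENNReal.ofReal_le_ofReal (by linarith)).trans
      (ofReal_one_sub_le_sparseMeasure hl.le hlam L)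
  obtain ⟨m, hm, F, hF⟩ := exists_isDisjunct_card_le_log (n := n) (L := L) (by omega) (by omega)
  refine ⟨hgood, ⟨m, hm, F, hF⟩, m, F, fun b t => if b then decodeCompatible F t else none,
    hm, hgood.trans (measure_mono ?_),
    (integral_one_add_mul_ite_le _ m.cast_nonneg _).trans (by linarith)⟩
  rintro ω ⟨hpos, hle⟩
  obtain ⟨i, hi, hdec⟩ := hF.exists_decodeCompatible_eq_some (card_pos.1 hpos) hle
  refine ⟨i, ?_, (mem_filter.1 hi).2⟩
  simp only [decide_eq_true hpos, if_true]
  exact hdec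

/-- For feasible targets `e^{-λ} < α < 1`, there exist a truncation level `L` and a
constant `C_L` such that for all large `n`: (a) `P(1 ≤ K_n ≤ L) ≥ 1-α`;
(b) there is an `L`-disjunct family of size `≤ C_L log n`; and consequently a two-round
procedure (global test, then the disjunct family if positive, decoding via some rule
`Φ` of the test outcomes) succeeds with probability `≥ 1-α` and uses at most
`1 + C_L log n` expected tests. -/
theorem two_round_upper_bound (lam α : ℝ) (hl : 0 < lam)
    (hα0 : 0 < α) (hα1 : α < 1) (hfeas : Real.exp (-lam) < α) :
    ∃ (L : ℕ) (C : ℝ) (N : ℕ), ∀ n : ℕ, N ≤ n →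
      (ENNReal.ofReal (1 - α) ≤
        sparseMeasure lam n {ω | 1 ≤ numExcellent ω ∧ numExcellent ω ≤ L}) ∧
      (∃ m : ℕ, (m : ℝ) ≤ C * Real.log n ∧
        ∃ F : Fin m → Finset (Fin n), IsDisjunct L F) ∧
      (∃ (m : ℕ) (F : Fin m → Finset (Fin n))
          (Φ : Bool → (Fin m → Bool) → Option (Fin n)),
        (m : ℝ) ≤ C * Real.log n ∧
        ENNReal.ofReal (1 - α) ≤
          sparseMeasure lam n
            {ω | ∃ i : Fin n,
              Φ (decide (1 ≤ numExcellent ω))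
                  (fun j => decide ((F j ∩ Finset.univ.filter fun i => ω i = true).Nonempty))
                = some i ∧ ω i = true} ∧
        ∫ ω, (1 + (m : ℝ) * (if 1 ≤ numExcellent ω then 1 else 0))
            ∂(sparseMeasure lam n) ≤ 1 + C * Real.log n) :=
  two_round_upper_bound_general lam α hl hfeas
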